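/- Let K be a field, V a K-vector space, and d ≥ 2. Let c be the cyclic shift permutation of Fin d sending i to i + 1 (mod d), acting linearly on ⊗^d V by permuting tensor factors. Then the K-submodule of ⊗^d V spanned by all elements x − c_*(x), x ∈ ⊗^d V, is equal to the K-submodule spanned by all 'commutators' μ(a ⊗ b) − μ(b ⊗ a), where p, q range over positive integers with p + q = d and a ∈ ⊗^p V, b ∈ ⊗^q V. In other words, the space of coinvariants of ⊗^d V under the cyclic group generated by c agrees with the quotient of ⊗^d V by the span of degree-d commutators of lower-degree tensors. -/
import Mathlib


open scoped TensorProduct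
open PiTensorProduct

lemma fin_append_eq_dite {V : Type*} {p q : ℕ} (va : Fin p → V) (vb : Fin q → V)
    (k : Fin (p + q)) :
    Fin.append va vb k =
      if hk : (k : ℕ) < p then va ⟨k, hk⟩ else vb ⟨(k : ℕ) - p, by omega⟩ := by
  by_cases hk : (k : ℕ) < p
  · rw [dif_pos hk]
    have hk2 : k = Fin.castAdd q ⟨(k : ℕ), hk⟩ := by ext; rfl
    conv_lhs => rw [hk2]
    rw [Fin.append_left]
  · rw [dif_neg hk]
    have hk2 : k = Fin.natAdd p ⟨(k : ℕ) - p, by omega⟩ := by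
      ext; simp; omega
    conv_lhs => rw [hk2]
    rw [Fin.append_right]

/-- Let `K` be a field, `V` a `K`-vector space, and `d ≥ 2`.  Let `c` be the
cyclic shift permutation of `Fin d` sending `i` to `i + 1 (mod d)`, acting linearly on
`⨂[K]^d V` by permuting tensor factors (`PiTensorProduct.reindex`).  Then the `K`-submodule of
`⨂[K]^d V` spanned by all `x - c_* x` equals the `K`-submodule spanned by all "commutators"
`μ (a ⊗ b) - μ (b ⊗ a)`, where `p, q` range over positive integers with `p + q = d`,
`a ∈ ⨂[K]^p V`, `b ∈ ⨂[K]^q V`, and `μ` is the canonical concatenation of tensor powers.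
In other words, the cyclic coinvariants of `⨂[K]^d V` agree with the quotient by the span of
degree-`d` commutators of lower-degree tensors. -/
theorem johnson_cokernel_cyclic_coinvariants_eq_commutator_quotient
    (K V : Type*) [Field K] [AddCommGroup V] [Module K V]
    (d : ℕ) (hd : 2 ≤ d)
    -- the canonical graded multiplications into degree `d`, characterized on pure tensors
    -- as concatenation of tensors:
    (μ : ∀ p' q' : ℕ, p' + q' = d → ((⨂[K]^p' V) ⊗[K] (⨂[K]^q' V) →ₗ[K] ⨂[K]^d V))
    (hμ : ∀ (p' q' : ℕ) (h : p' + q' = d) (va : Fin p' → V) (vb : Fin q' → V),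
      μ p' q' h (tprod K va ⊗ₜ[K] tprod K vb)
        = tprod K fun i : Fin d => Fin.append va vb ((finCongr h).symm i))
    -- the cyclic shift permutation of `Fin d` sending `i` to `i + 1 (mod d)`:
    (c : Equiv.Perm (Fin d)) (hc : ∀ i : Fin d, ((c i : ℕ)) = ((i : ℕ) + 1) % d) :
    Submodule.span K
        {y : ⨂[K]^d V | ∃ x : ⨂[K]^d V,
          y = x - PiTensorProduct.reindex K (fun _ : Fin d => V) c x}
      = Submodule.span K
        {y : ⨂[K]^d V | ∃ (p q : ℕ) (_ : 1 ≤ p) (_ : 1 ≤ q) (h : p + q = d)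
          (a : ⨂[K]^p V) (b : ⨂[K]^q V),
          y = μ p q h (a ⊗ₜ[K] b) - μ q p (by omega) (b ⊗ₜ[K] a)} := by
  classical
  have hd1 : 0 < d := by omega
  -- value of powers of `c`
  have hcpow : ∀ (k : ℕ) (i : Fin d), (((c ^ k) i : Fin d) : ℕ) = ((i : ℕ) + k) % d := by
    intro k
    induction k with
    | zero =>
      intro i
      simp [Nat.mod_eq_of_lt i.isLt]
    | succ k ih =>
      intro i
      have h1 : (c ^ (k + 1)) i = (c ^ k) (c i) := by
        rw [pow_succ]; rfl
      rw [h1, ih, hc, Nat.mod_add_mod, Nat.add_assoc, Nat.add_comm 1 k]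
  -- membership of `x - (c^k)_* x` in the LHS span
  have memS_pow : ∀ (k : ℕ) (x : ⨂[K]^d V),
      x - PiTensorProduct.reindex K (fun _ : Fin d => V) (c ^ k) x ∈
        Submodule.span K {y : ⨂[K]^d V | ∃ x : ⨂[K]^d V,
          y = x - PiTensorProduct.reindex K (fun _ : Fin d => V) c x} := by
    intro k
    induction k with
    | zero =>
      intro x
      have h1 : (1 : Equiv.Perm (Fin d)) = Equiv.refl (Fin d) := rfl
      rw [pow_zero, h1, PiTensorProduct.reindex_refl]
      simp
    | succ k ih =>
      intro x
      have key : PiTensorProduct.reindex K (fun _ : Fin d => V) (c ^ (k + 1)) x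
          = PiTensorProduct.reindex K (fun _ : Fin d => V) (c ^ k)
              (PiTensorProduct.reindex K (fun _ : Fin d => V) c x) := by
        have h2 := PiTensorProduct.reindex_reindex (R := K) (s := fun _ : Fin d => V)
          c (c ^ k) x
        have h3 : c.trans (c ^ k) = c ^ (k + 1) := by rw [pow_succ]; rfl
        rw [← h3]
        exact h2.symm
      have hsplit : x - PiTensorProduct.reindex K (fun _ : Fin d => V) (c ^ (k + 1)) x
          = (x - PiTensorProduct.reindex K (fun _ : Fin d => V) c x)
            + ((PiTensorProduct.reindex K (fun _ : Fin d => V) c x)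
              - PiTensorProduct.reindex K (fun _ : Fin d => V) (c ^ k)
                  (PiTensorProduct.reindex K (fun _ : Fin d => V) c x)) := by
        rw [key]; abel
      rw [hsplit]
      exact add_mem (Submodule.subset_span ⟨x, rfl⟩) (ih _)
  -- pure-tensor commutator identity
  have hpure : ∀ (p q : ℕ) (h : p + q = d) (h' : q + p = d)
      (va : Fin p → V) (vb : Fin q → V),
      μ q p h' (tprod K vb ⊗ₜ[K] tprod K va)
        = PiTensorProduct.reindex K (fun _ : Fin d => V) (c ^ q)
            (μ p q h (tprod K va ⊗ₜ[K] tprod K vb)) := by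
    intro p q h h' va vb
    rw [hμ, hμ, PiTensorProduct.reindex_tprod]
    congr 1
    funext i
    set j : Fin d := (c ^ q).symm i with hjdef
    have hji : (c ^ q) j = i := Equiv.apply_symm_apply _ i
    have hval : ((j : ℕ) + q) % d = (i : ℕ) := by
      rw [← hcpow q j, hji]
    rw [fin_append_eq_dite, fin_append_eq_dite]
    have hcoe1 : (((finCongr h').symm i : Fin (q + p)) : ℕ) = (i : ℕ) := rfl
    have hcoe2 : (((finCongr h).symm j : Fin (p + q)) : ℕ) = (j : ℕ) := rfl
    by_cases hcase : (j : ℕ) < p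
    · have hiq : (i : ℕ) = (j : ℕ) + q := by
        rw [← hval, Nat.mod_eq_of_lt (by omega)]
      rw [dif_neg (by omega), dif_pos (by omega : (((finCongr h).symm j : Fin (p+q)) : ℕ) < p)]
      congr 1
      ext
      simp only [hcoe1, hcoe2]
      omega
    · have hiq : (i : ℕ) = (j : ℕ) - p := by
        have hj : (j : ℕ) < d := j.isLt
        rw [← hval, Nat.mod_eq_sub_mod (by omega), Nat.mod_eq_of_lt (by omega)]
        omega
      rw [dif_pos (by omega : (((finCongr h').symm i : Fin (q+p)) : ℕ) < q),
        dif_neg (by omega)]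
      congr 1
      ext
      simp only [hcoe1, hcoe2]
      omega
  apply le_antisymm
  · -- LHS ≤ RHS
    rw [Submodule.span_le]
    rintro y ⟨x, rfl⟩
    have hx : x ∈ Submodule.span K (Set.range (tprod K (s := fun _ : Fin d => V))) := by
      rw [PiTensorProduct.span_tprod_eq_top]; trivial
    induction hx using Submodule.span_induction with
    | mem x hx =>
      obtain ⟨v, rfl⟩ := hx
      have h : (d - 1) + 1 = d := by omega
      have h' : 1 + (d - 1) = d := by omega
      set va : Fin (d - 1) → V := fun i => v ⟨(i : ℕ), by omega⟩ with hva
      set vb : Fin 1 → V := fun _ => v ⟨d - 1, by omega⟩ with hvb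
      have claim1 : μ (d - 1) 1 h (tprod K va ⊗ₜ[K] tprod K vb) = tprod K v := by
        rw [hμ]
        congr 1
        funext i
        rw [fin_append_eq_dite]
        have hcoe : (((finCongr h).symm i : Fin ((d-1) + 1)) : ℕ) = (i : ℕ) := rfl
        by_cases hcase : (i : ℕ) < d - 1
        · rw [dif_pos (by omega : (((finCongr h).symm i : Fin ((d-1)+1)) : ℕ) < d - 1)]
          simp only [hva]
          congr 1
        · rw [dif_neg (by omega)]
          simp only [hvb]
          congr 1
          ext
          have := i.isLt
          simp
          omega
      have claim2 : μ 1 (d - 1) h' (tprod K vb ⊗ₜ[K] tprod K va)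
          = PiTensorProduct.reindex K (fun _ : Fin d => V) c (tprod K v) := by
        rw [hμ, PiTensorProduct.reindex_tprod]
        congr 1
        funext i
        rw [fin_append_eq_dite]
        have hcoe : (((finCongr h').symm i : Fin (1 + (d-1))) : ℕ) = (i : ℕ) := rfl
        have hm : ((c.symm i : Fin d) : ℕ) < d := (c.symm i).isLt
        have hmi : (((c.symm i : Fin d) : ℕ) + 1) % d = (i : ℕ) := by
          rw [← hc (c.symm i), Equiv.apply_symm_apply]
        by_cases hcase : (i : ℕ) < 1
        · rw [dif_pos (by omega : (((finCongr h').symm i : Fin (1+(d-1))) : ℕ) < 1)]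
          simp only [hvb]
          congr 1
          ext
          have hmd : ((c.symm i : Fin d) : ℕ) + 1 = d := by
            by_contra hne
            have hlt : ((c.symm i : Fin d) : ℕ) + 1 < d := by omega
            rw [Nat.mod_eq_of_lt hlt] at hmi
            omega
          simp
          omega
        · rw [dif_neg (by omega)]
          simp only [hva]
          congr 1
          ext
          have hmd : ((c.symm i : Fin d) : ℕ) + 1 < d := by
            by_contra hne
            have heq : ((c.symm i : Fin d) : ℕ) + 1 = d := by omega
            rw [heq, Nat.mod_self] at hmi
            omega
          rw [Nat.mod_eq_of_lt hmd] at hmi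
          simp
          omega
      refine Submodule.subset_span ⟨d - 1, 1, by omega, le_refl 1, h,
        tprod K va, tprod K vb, ?_⟩
      rw [claim1, claim2]
    | zero => simp
    | add x y hx hy ihx ihy =>
      have hsplit : (x + y) - PiTensorProduct.reindex K (fun _ : Fin d => V) c (x + y)
          = (x - PiTensorProduct.reindex K (fun _ : Fin d => V) c x)
            + (y - PiTensorProduct.reindex K (fun _ : Fin d => V) c y) := by
        rw [map_add]; abel
      rw [hsplit]
      exact add_mem ihx ihy
    | smul r x hx ihx =>
      have hsplit : (r • x) - PiTensorProduct.reindex K (fun _ : Fin d => V) c (r • x)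
          = r • (x - PiTensorProduct.reindex K (fun _ : Fin d => V) c x) := by
        rw [map_smul, smul_sub]
      rw [hsplit]
      exact Submodule.smul_mem _ _ ihx
  · -- RHS ≤ LHS
    rw [Submodule.span_le]
    rintro y ⟨p, q, hp, hq, h, a, b, rfl⟩
    have h' : q + p = d := by omega
    have key : ∀ (b : ⨂[K]^q V) (a : ⨂[K]^p V),
        μ p q h (a ⊗ₜ[K] b) - μ q p h' (b ⊗ₜ[K] a) ∈
          Submodule.span K {y : ⨂[K]^d V | ∃ x : ⨂[K]^d V,
            y = x - PiTensorProduct.reindex K (fun _ : Fin d => V) c x} := by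
      intro b
      have hb : b ∈ Submodule.span K (Set.range (tprod K (s := fun _ : Fin q => V))) := by
        rw [PiTensorProduct.span_tprod_eq_top]; trivial
      induction hb using Submodule.span_induction with
      | mem b hbmem =>
        obtain ⟨vb, rfl⟩ := hbmem
        intro a
        have ha : a ∈ Submodule.span K (Set.range (tprod K (s := fun _ : Fin p => V))) := by
          rw [PiTensorProduct.span_tprod_eq_top]; trivial
        induction ha using Submodule.span_induction with
        | mem a hamem =>
          obtain ⟨va, rfl⟩ := hamem
          rw [hpure p q h h' va vb]
          exact memS_pow q _
        | zero => simp
        | add x y hx hy ihx ihy =>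
          have hsplit : μ p q h ((x + y) ⊗ₜ[K] tprod K vb)
                - μ q p h' (tprod K vb ⊗ₜ[K] (x + y))
              = (μ p q h (x ⊗ₜ[K] tprod K vb) - μ q p h' (tprod K vb ⊗ₜ[K] x))
                + (μ p q h (y ⊗ₜ[K] tprod K vb) - μ q p h' (tprod K vb ⊗ₜ[K] y)) := by
            rw [TensorProduct.add_tmul, TensorProduct.tmul_add, map_add, map_add]; abel
          rw [hsplit]
          exact add_mem ihx ihy
        | smul r x hx ihx =>
          have hsplit : μ p q h ((r • x) ⊗ₜ[K] tprod K vb)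
                - μ q p h' (tprod K vb ⊗ₜ[K] (r • x))
              = r • (μ p q h (x ⊗ₜ[K] tprod K vb) - μ q p h' (tprod K vb ⊗ₜ[K] x)) := by
            rw [← TensorProduct.smul_tmul', TensorProduct.tmul_smul, map_smul, map_smul,
              smul_sub]
          rw [hsplit]
          exact Submodule.smul_mem _ _ ihx
      | zero => intro a; simp
      | add x y hx hy ihx ihy =>
        intro a
        have hsplit : μ p q h (a ⊗ₜ[K] (x + y)) - μ q p h' ((x + y) ⊗ₜ[K] a)
            = (μ p q h (a ⊗ₜ[K] x) - μ q p h' (x ⊗ₜ[K] a))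
              + (μ p q h (a ⊗ₜ[K] y) - μ q p h' (y ⊗ₜ[K] a)) := by
          rw [TensorProduct.add_tmul, TensorProduct.tmul_add, map_add, map_add]; abel
        rw [hsplit]
        exact add_mem (ihx a) (ihy a)
      | smul r x hx ihx =>
        intro a
        have hsplit : μ p q h (a ⊗ₜ[K] (r • x)) - μ q p h' ((r • x) ⊗ₜ[K] a)
            = r • (μ p q h (a ⊗ₜ[K] x) - μ q p h' (x ⊗ₜ[K] a)) := by
          rw [← TensorProduct.smul_tmul', TensorProduct.tmul_smul, map_smul, map_smul,
            smul_sub]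
        rw [hsplit]
        exact Submodule.smul_mem _ _ (ihx a)
    exact key b a
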